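/- For coprime positive integers l₁ and l₂, the generalized Hecke operators satisfy T_{l₁} ∘ T_{l₂} = T_{l₁·l₂}, where for a formal series h, T_n(h) = Σ_{uy=n, 0≤v<y} h ∥ [[u,v],[0,y]] + Σ_{uy=n/2, 0≤v<2y} h ∥ [[√2·u, v/√2],[0,√2·y]] (second sum only when n is even). -/

import Mathlib

noncomputable section

/-- The coefficient ring `K = 𝓛[…, x_m^{[r]}, …]` with `𝓛 = ℂ` (which contains all
roots of unity), one variable `x_m^{[r]}` for each `m ∈ ℕ` and real index `r`
(the indices used are `r ∈ ℕ ∪ √2·ℕ`). -/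
abbrev RepRing := MvPolynomial (ℕ × ℝ) ℂ

/-- The endomorphism `ψ_u` of `K` sending `x_m^{[r]}` to `x_m^{[ru]}`. -/
def psiK (u : ℝ) : RepRing →ₐ[ℂ] RepRing :=
  MvPolynomial.rename (fun p => (p.1, p.2 * u))

/-- A formal series `Σ_e c_e q^e` with exponents `e ∈ ℚ` and coefficients in `K`,
recorded by its coefficient function. -/
abbrev FormalSeries := ℚ → RepRing

/-- The slash action of `α = s·[[u, v],[0, y]]` (with `s > 0` a real scalar, typically
`1` or `√2`, and `u, v, y` rational): `x_m^{[r]} ↦ x_m^{[r·su]}`, and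
`q^e ↦ e^{2πive/y}·q^{ue/y}`.  In terms of coefficient functions, the coefficient of
`q^{e'}` of `h ∥ α` is `e^{2πive'/u}·ψ_{su}(c_{e'y/u})`. -/
def slashA (h : FormalSeries) (s : ℝ) (u v y : ℚ) : FormalSeries := fun e' =>
  Complex.exp (2 * (Real.pi : ℂ) * Complex.I * ((v * e' / u : ℚ) : ℂ)) •
    psiK (s * (u : ℝ)) (h (e' * y / u))

/-- The generalized Hecke operator
`T_n h = Σ_{uy=n, 0≤v<y} h ∥ [[u,v],[0,y]] + Σ_{uy=n/2, 0≤v<2y} h ∥ [[√2u, v/√2],[0,√2y]]`,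
the second sum being present only when `n` is even.  Note
`[[√2u, v/√2],[0,√2y]] = √2·[[u, v/2],[0,y]]`. -/
def heckeT (n : ℕ) (h : FormalSeries) : FormalSeries :=
  (∑ x ∈ n.divisorsAntidiagonal, ∑ v ∈ Finset.range x.2,
    slashA h 1 (x.1 : ℚ) (v : ℚ) (x.2 : ℚ))
  + (if Even n then
      ∑ x ∈ (n / 2).divisorsAntidiagonal, ∑ v ∈ Finset.range (2 * x.2),
        slashA h (Real.sqrt 2) (x.1 : ℚ) ((v : ℚ) / 2) (x.2 : ℚ)
    else 0)

/-- `h` is a formal series supported on integer exponents (e.g. `q^{-1} + Σ_{m≥1} c_m q^m`). -/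
def IntSupported (h : FormalSeries) : Prop :=
  ∀ e : ℚ, (∀ z : ℤ, (z : ℚ) ≠ e) → h e = 0

/-! Composing slash actions multiplies the matrices:
`[[u, v/d],[0, y]]·[[u', v'/d'],[0, y']] = [[uu', (v·d'u' + v'·dy)/(dd')],[0, yy']]`.
For coprime levels, pairs of factorisations `uy = l₁`, `u'y' = l₂` correspond to factorisations
`(uu')(yy') = l₁l₂`, and for fixed factorisations the numerators `v·d'u' + v'·dy` run over all
residues modulo `dd'yy'` exactly once, since `d'u'` is prime to `dy`.  Because `h` is supported
on integer exponents, `h ∥ [[u, v],[0, y]]` only depends on `v` modulo `y`, so these residues may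
be replaced by `0 ≤ V < dd'yy'`.  At most one of two coprime levels is even, so the `√2`-part
is never composed with itself. -/

open Finset

theorem Nat.Coprime.sum_divisorsAntidiagonal_mul {M : Type*} [AddCommMonoid M] {m n : ℕ}
    (hmn : m.Coprime n) (F : ℕ → ℕ → M) :
    ∑ x ∈ m.divisorsAntidiagonal, ∑ y ∈ n.divisorsAntidiagonal, F (x.1 * y.1) (x.2 * y.2) =
      ∑ x ∈ (m * n).divisorsAntidiagonal, F x.1 x.2 := by
  rw [Nat.sum_divisorsAntidiagonal (fun a b => ∑ y ∈ n.divisorsAntidiagonal, F (a * y.1) (b * y.2)),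
    Nat.sum_divisorsAntidiagonal F, Nat.divisors_mul, Finset.mul_def,
    sum_image hmn.mul_injOn_divisors, sum_product]
  refine sum_congr rfl fun a ha => ?_
  rw [Nat.sum_divisorsAntidiagonal (fun b c => F (a * b) (m / a * c))]
  refine sum_congr rfl fun b hb => ?_
  rw [Nat.div_mul_div_comm (Nat.dvd_of_mem_divisors ha) (Nat.dvd_of_mem_divisors hb)]

theorem Function.Periodic.sum_range_sum_range_mul_add_mul {M : Type*} [AddCommMonoid M]
    {a c e : ℕ} (hac : a.Coprime c) {g : ℕ → M} (hg : Function.Periodic g (c * e)) :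
    ∑ v ∈ range c, ∑ w ∈ range e, g (v * a + w * c) = ∑ V ∈ range (c * e), g V := by
  set f : ℕ × ℕ → ℕ := fun p => (p.1 * a + p.2 * c) % (c * e)
  have hinj : Set.InjOn f ↑(range c ×ˢ range e) := by
    rintro ⟨v, w⟩ hvw ⟨v', w'⟩ hvw' hmod
    simp only [coe_product, coe_range, Set.mem_prod, Set.mem_Iio] at hvw hvw'
    have hv : v = v' := by
      have : v * a ≡ v' * a [MOD c] := by
        simpa [Nat.ModEq, Nat.add_mul_mod_self_right] using Nat.ModEq.of_mul_right e hmod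
      exact (Nat.ModEq.cancel_right_of_coprime hac.symm this).eq_of_lt_of_lt hvw.1 hvw'.1
    subst hv
    have : w * c ≡ w' * c [MOD e * c] := by
      rw [mul_comm e]
      exact Nat.ModEq.add_left_cancel' _ hmod
    have hc : c ≠ 0 := by rintro rfl; simp at hvw
    exact Prod.ext rfl ((Nat.ModEq.mul_right_cancel' hc this).eq_of_lt_of_lt hvw.2 hvw'.2)
  have himage : (range c ×ˢ range e).image f = range (c * e) := by
    refine eq_of_subset_of_card_le (fun V hV => ?_) ?_
    · obtain ⟨p, hp, rfl⟩ := mem_image.mp hV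
      simp only [mem_product, mem_range] at hp
      exact mem_range.mpr (Nat.mod_lt _ (Nat.mul_pos (by omega) (by omega)))
    · rw [card_image_of_injOn hinj, card_product, card_range, card_range, card_range]
  rw [← sum_product', ← himage, sum_image hinj]
  exact sum_congr rfl fun p _ => (hg.map_mod_nat _).symm

lemma psiK_psiK (a b : ℝ) (x : RepRing) : psiK a (psiK b x) = psiK (b * a) x := by
  simp only [psiK, MvPolynomial.rename_rename]
  congr 2
  funext p
  simp [mul_assoc]

lemma slashA_sum {ι : Type*} (t : Finset ι) (f : ι → FormalSeries) (s : ℝ) (u v y : ℚ) :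
    slashA (∑ i ∈ t, f i) s u v y = ∑ i ∈ t, slashA (f i) s u v y := by
  funext e
  simp [slashA, Finset.sum_apply, map_sum, Finset.smul_sum]

lemma slashA_add (f g : FormalSeries) (s : ℝ) (u v y : ℚ) :
    slashA (f + g) s u v y = slashA f s u v y + slashA g s u v y := by
  funext e
  simp [slashA, smul_add]

lemma slashA_slashA (h : FormalSeries) (s s' : ℝ) {u u' : ℚ} (hu : u ≠ 0) (hu' : u' ≠ 0)
    (v y v' y' : ℚ) :
    slashA (slashA h s' u' v' y') s u v y =
      slashA h (s * s') (u * u') (v * u' + v' * y) (y * y') := by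
  funext e
  simp only [slashA, map_smul, psiK_psiK, smul_smul, ← Complex.exp_add, ← mul_add,
    ← Rat.cast_add]
  rw [show e * y / u * y' / u' = e * (y * y') / (u * u') by field_simp,
    show s' * (u' : ℝ) * (s * u) = s * s' * ((u * u' : ℚ) : ℝ) by push_cast; ring,
    show v * e / u + v' * (e * y / u) / u' = (v * u' + v' * y) * e / (u * u') by field_simp]

lemma IntSupported.periodic_slashA {h : FormalSeries} (hh : IntSupported h) (s : ℝ) (u y : ℚ) :
    Function.Periodic (fun v => slashA h s u v y) y := by
  intro v
  funext e
  by_cases h0 : h (e * y / u) = 0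
  · simp [slashA, h0]
  obtain ⟨z, hz⟩ : ∃ z : ℤ, (z : ℚ) = e * y / u := by
    by_contra! hne
    exact h0 (hh _ hne)
  -- the shift multiplies the coefficient of `q^e` by `exp(2πi·ey/u) = 1`
  have hshift : (v + y) * e / u = v * e / u + z := by rw [hz]; ring
  simp only [slashA, hshift, Rat.cast_add, Rat.cast_intCast, mul_add, Complex.exp_add,
    Complex.exp_int_mul_two_pi_mul_I, mul_one, mul_comm _ (z : ℂ)]

/-- `Σ_{uy = n} Σ_{0 ≤ v < dy} h ∥ s·[[u, v/d],[0, y]]`. -/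
def heckeSlashSum (s : ℝ) (d n : ℕ) (h : FormalSeries) : FormalSeries :=
  ∑ x ∈ n.divisorsAntidiagonal, ∑ v ∈ range (d * x.2),
    slashA h s (x.1 : ℚ) ((v : ℚ) / d) (x.2 : ℚ)

lemma heckeSlashSum_add (s : ℝ) (d n : ℕ) (f g : FormalSeries) :
    heckeSlashSum s d n (f + g) = heckeSlashSum s d n f + heckeSlashSum s d n g := by
  simp only [heckeSlashSum, slashA_add, sum_add_distrib]

lemma heckeT_eq_heckeSlashSum (n : ℕ) (h : FormalSeries) :
    heckeT n h = heckeSlashSum 1 1 n h +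
      if Even n then heckeSlashSum (Real.sqrt 2) 2 (n / 2) h else 0 := by
  simp [heckeT, heckeSlashSum]

lemma heckeT_of_not_even {n : ℕ} (hn : ¬Even n) (h : FormalSeries) :
    heckeT n h = heckeSlashSum 1 1 n h := by
  rw [heckeT_eq_heckeSlashSum, if_neg hn, add_zero]

lemma heckeT_two_mul (k : ℕ) (h : FormalSeries) :
    heckeT (2 * k) h = heckeSlashSum 1 1 (2 * k) h + heckeSlashSum (Real.sqrt 2) 2 k h := by
  rw [heckeT_eq_heckeSlashSum, if_pos (even_two_mul k), Nat.mul_div_cancel_left k two_pos]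

lemma sum_range_sum_range_slashA_slashA {h : FormalSeries} (hh : IntSupported h) (s s' : ℝ)
    {d d' u y u' : ℕ} (hd : d ≠ 0) (hd' : d' ≠ 0) (hu : u ≠ 0) (hu' : u' ≠ 0)
    (hcop : (d' * u').Coprime (d * y)) (y' : ℕ) :
    ∑ v ∈ range (d * y), ∑ v' ∈ range (d' * y'),
        slashA (slashA h s' u' ((v' : ℚ) / d') y') s u ((v : ℚ) / d) y =
      ∑ V ∈ range (d * d' * (y * y')),
        slashA h (s * s') ((u * u' : ℕ) : ℚ) ((V : ℚ) / (d * d' : ℕ)) ((y * y' : ℕ) : ℚ) := by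
  set g : ℕ → FormalSeries := fun V =>
    slashA h (s * s') ((u * u' : ℕ) : ℚ) ((V : ℚ) / (d * d' : ℕ)) ((y * y' : ℕ) : ℚ)
  have hg : Function.Periodic g (d * y * (d' * y')) := by
    intro V
    simp only [g]
    rw [show ((V + d * y * (d' * y') : ℕ) : ℚ) / (d * d' : ℕ) =
        (V : ℚ) / (d * d' : ℕ) + (y * y' : ℕ) by push_cast; field_simp]
    exact hh.periodic_slashA _ _ _ _
  have hcomp : ∀ v v' : ℕ, slashA (slashA h s' u' ((v' : ℚ) / d') y') s u ((v : ℚ) / d) y =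
      g (v * (d' * u') + v' * (d * y)) := by
    intro v v'
    rw [slashA_slashA h s s' (by exact_mod_cast hu) (by exact_mod_cast hu')]
    simp only [g]
    congr 1 <;> push_cast <;> field_simp
  simp only [hcomp]
  rw [hg.sum_range_sum_range_mul_add_mul hcop, mul_mul_mul_comm]

theorem heckeSlashSum_heckeSlashSum {h : FormalSeries} (hh : IntSupported h) (s s' : ℝ)
    {d d' m n : ℕ} (hd : d ≠ 0) (hd' : d' ≠ 0) (hmn : (d * m).Coprime (d' * n)) :
    heckeSlashSum s d m (heckeSlashSum s' d' n h) = heckeSlashSum (s * s') (d * d') (m * n) h := by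
  simp only [heckeSlashSum, slashA_sum]
  refine Eq.trans ?_ (hmn.coprime_mul_left.coprime_mul_left_right.sum_divisorsAntidiagonal_mul
    fun a b => ∑ V ∈ range (d * d' * b), slashA h (s * s') (a : ℚ) ((V : ℚ) / (d * d' : ℕ)) b)
  refine sum_congr rfl fun x hx => sum_comm.trans (sum_congr rfl fun x' hx' => ?_)
  have hy : x.2 ∣ m := Nat.dvd_of_mem_divisors (Nat.snd_mem_divisors_of_mem_antidiagonal hx)
  have hu' : x'.1 ∣ n := Nat.dvd_of_mem_divisors (Nat.fst_mem_divisors_of_mem_antidiagonal hx')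
  exact sum_range_sum_range_slashA_slashA hh s s' hd hd'
    (Nat.left_ne_zero_of_mem_divisorsAntidiagonal hx)
    (Nat.left_ne_zero_of_mem_divisorsAntidiagonal hx')
    ((hmn.symm.coprime_dvd_left (mul_dvd_mul_left d' hu')).coprime_dvd_right
      (mul_dvd_mul_left d hy)) x'.2

theorem heckeT_mul_coprime_general (l₁ l₂ : ℕ)
    (hco : Nat.Coprime l₁ l₂) (h : FormalSeries) (hsupp : IntSupported h) :
    heckeT l₁ (heckeT l₂ h) = heckeT (l₁ * l₂) h := by
  by_cases he₁ : Even l₁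
  · obtain ⟨k, rfl⟩ := even_iff_two_dvd.mp he₁
    have he₂ : ¬Even l₂ := Nat.not_even_iff_odd.mpr
      (Nat.coprime_two_left.mp (hco.coprime_dvd_left (dvd_mul_right 2 k)))
    rw [heckeT_of_not_even he₂, heckeT_two_mul, mul_assoc, heckeT_two_mul,
      heckeSlashSum_heckeSlashSum hsupp 1 1 one_ne_zero one_ne_zero (by simpa using hco),
      heckeSlashSum_heckeSlashSum hsupp (Real.sqrt 2) 1 two_ne_zero one_ne_zero
        (by simpa using hco)]
    simp only [mul_one, mul_assoc]
  by_cases he₂ : Even l₂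
  · obtain ⟨k, rfl⟩ := even_iff_two_dvd.mp he₂
    rw [heckeT_two_mul, heckeT_of_not_even he₁, heckeSlashSum_add, mul_left_comm, heckeT_two_mul,
      heckeSlashSum_heckeSlashSum hsupp 1 1 one_ne_zero one_ne_zero (by simpa using hco),
      heckeSlashSum_heckeSlashSum hsupp 1 (Real.sqrt 2) one_ne_zero two_ne_zero
        (by simpa using hco)]
    simp only [mul_one, one_mul, mul_left_comm]
  have he : ¬Even (l₁ * l₂) := by simp [Nat.even_mul, he₁, he₂]
  rw [heckeT_of_not_even he₁, heckeT_of_not_even he₂, heckeT_of_not_even he,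
    heckeSlashSum_heckeSlashSum hsupp 1 1 one_ne_zero one_ne_zero (by simpa using hco)]
  simp only [mul_one]

/-- For coprime positive integers `l₁`, `l₂`, the generalized Hecke operators satisfy
`T_{l₁} ∘ T_{l₂} = T_{l₁·l₂}`. -/
theorem heckeT_mul_coprime (l₁ l₂ : ℕ) (h₁ : 0 < l₁) (h₂ : 0 < l₂)
    (hco : Nat.Coprime l₁ l₂) (h : FormalSeries) (hsupp : IntSupported h) :
    heckeT l₁ (heckeT l₂ h) = heckeT (l₁ * l₂) h :=
  heckeT_mul_coprime_general l₁ l₂ hco h hsupp
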